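/- arXiv:1504.03121 — 2 statements merged into one kernel-verified Lean document; each statement's English description precedes it below -/
import Mathlib

section
/- Let q be a prime, ξ a primitive q-th root of unity, λ = 1-ξ, and 1 ≤ k ≤ q-1. Then 1 - ξ^k = λ·k·(1 - ((k-1)/2)·λ + r) where r ∈ λ²·ℤ_{(q)}[λ]; more precisely, 1 - (1-λ)^k = λk·∑_{j=0}^{k-1} binom(k-1, j)·(-λ)^j/(j+1), and every coefficient binom(k-1,j)/(j+1) lies in ℤ localized at (q). -/
/-! Expanding `(1 - λ)^k` binomially, `1 - (1 - λ)^k = λ ∑_{j<k} C(k, j+1) (-λ)^j`, and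
`C(k, j+1) = k C(k-1, j) / (j+1)`. The denominators `j + 1 ≤ k < q` are prime to `q`. -/

open Finset

theorem one_sub_one_sub_pow_succ {R : Type*} [CommRing R] (n : ℕ) (x : R) :
    1 - (1 - x) ^ (n + 1) = x * ∑ j ∈ range (n + 1), ((n + 1).choose (j + 1) : R) * (-x) ^ j := by
  rw [show 1 - x = -x + 1 by ring, add_pow, sum_range_succ', mul_sum]
  simp only [one_pow, mul_one, pow_zero, Nat.choose_zero_right, Nat.cast_one, sub_add_cancel_right,
    ← sum_neg_distrib]
  exact sum_congr rfl fun j _ => by ring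

theorem cast_choose_succ_succ {K : Type*} [Field K] [CharZero K] (n j : ℕ) :
    ((n + 1).choose (j + 1) : K) = (n + 1) * n.choose j / (j + 1) := by
  rw [eq_div_iff (Nat.cast_add_one_ne_zero j)]
  exact_mod_cast (Nat.add_one_mul_choose_eq n j).symm

theorem one_sub_one_sub_pow {K : Type*} [Field K] [CharZero K] (k : ℕ) (x : K) :
    1 - (1 - x) ^ k = x * k * ∑ j ∈ range k, ((k - 1).choose j : K) * (-x) ^ j / (j + 1) := by
  rcases k with _ | n
  · simp
  rw [one_sub_one_sub_pow_succ, Nat.add_sub_cancel, mul_assoc]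
  congr 1
  rw [mul_sum]
  refine sum_congr rfl fun j _ => ?_
  rw [cast_choose_succ_succ]
  push_cast
  ring

theorem stmt6_general (q k : ℕ) (hk' : k ≤ q - 1) :
    (∀ lam : ℂ, 1 - (1 - lam) ^ k =
      lam * k * ∑ j ∈ Finset.range k,
        (Nat.choose (k - 1) j : ℂ) * (-lam) ^ j / (j + 1)) ∧
    (∀ j < k, ∃ a b : ℤ, b ≠ 0 ∧ ¬ ((q : ℤ) ∣ b) ∧
      (Nat.choose (k - 1) j : ℚ) / (j + 1) = (a : ℚ) / (b : ℚ)) := by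
  refine ⟨one_sub_one_sub_pow k, fun j hj =>
    ⟨(k - 1).choose j, j + 1, by positivity, ?_, by push_cast; rfl⟩⟩
  have hdenom : ¬ q ∣ j + 1 := Nat.not_dvd_of_pos_of_lt j.succ_pos (by omega)
  exact_mod_cast hdenom

theorem stmt6 (q k : ℕ) (hq : q.Prime) (hk : 1 ≤ k) (hk' : k ≤ q - 1) :
    (∀ lam : ℂ, 1 - (1 - lam) ^ k =
      lam * k * ∑ j ∈ Finset.range k,
        (Nat.choose (k - 1) j : ℂ) * (-lam) ^ j / (j + 1)) ∧
    (∀ j < k, ∃ a b : ℤ, b ≠ 0 ∧ ¬ ((q : ℤ) ∣ b) ∧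
      (Nat.choose (k - 1) j : ℚ) / (j + 1) = (a : ℚ) / (b : ℚ)) :=
  stmt6_general q k hk'
end

section
/- Let q ≥ 5 be prime, ξ a primitive q-th root of unity, λ = 1 - ξ. For 1 ≤ k ≤ q-1 and any integer l, write ξ^l·λ/(1-ξ^k) as an element of ℤ[ξ]. Then ξ^l·λ/(1-ξ^k) ≡ k* (mod λ), where k* ∈ {1,…,q-1} is the inverse of k modulo q; equivalently, ξ^l·λ/(1-ξ^k) - k* lies in the ideal (λ) of ℤ[ξ]. -/
/-!
Since `k * k* ≡ 1 [MOD q]`, `(ξ ^ k) ^ k* = ξ`, so `(1 - ξ) / (1 - ξ ^ k)` is the geometric sum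
`∑_{j < k*} ξ ^ (k * j)`. Writing `ξ ^ l = ξ ^ m` with `m : ℕ`, the difference to `k*` becomes
`∑_{j < k*} (ξ ^ (m + k * j) - 1)`, and every `ξ ^ n - 1 = -(1 - ξ) * ∑_{i < n} ξ ^ i` is a multiple
of `λ = 1 - ξ` in `ℤ[ξ]`.
-/

open Finset

theorem exists_mem_adjoin_pow_sub_one_eq {R : Type*} [CommRing R] (x : R) (n : ℕ) :
    ∃ z ∈ Algebra.adjoin ℤ {x}, x ^ n - 1 = (1 - x) * z :=
  ⟨-∑ i ∈ range n, x ^ i,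
    neg_mem <| sum_mem fun i _ => pow_mem (Algebra.self_mem_adjoin_singleton ℤ x) i,
    by linear_combination (geom_sum_mul x n).symm⟩

theorem exists_mem_adjoin_sum_pow_sub_card_eq {R ι : Type*} [CommRing R] (x : R)
    (s : Finset ι) (e : ι → ℕ) :
    ∃ z ∈ Algebra.adjoin ℤ {x}, ∑ i ∈ s, x ^ e i - s.card = (1 - x) * z := by
  choose z hz hz_eq using fun i => exists_mem_adjoin_pow_sub_one_eq x (e i)
  refine ⟨∑ i ∈ s, z i, sum_mem fun i _ => hz i, ?_⟩
  simp only [mul_sum, ← hz_eq, sum_sub_distrib, sum_const, nsmul_one]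

theorem one_sub_div_one_sub_pow_eq_geom_sum {K : Type*} [Field K] {ξ : K} {k k' : ℕ}
    (hξ : ξ ≠ 1) (hpow : (ξ ^ k) ^ k' = ξ) :
    (1 - ξ) / (1 - ξ ^ k) = ∑ j ∈ range k', (ξ ^ k) ^ j := by
  have hξk : ξ ^ k ≠ 1 := fun h => hξ (by rw [← hpow, h, one_pow])
  rw [geom_sum_eq hξk, hpow, ← neg_sub, ← neg_sub (ξ ^ k), neg_div_neg_eq]

theorem IsPrimitiveRoot.exists_pow_eq_zpow {K : Type*} [Field K] {ζ : K} {n : ℕ} [NeZero n]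
    (h : IsPrimitiveRoot ζ n) (l : ℤ) : ∃ m : ℕ, ζ ^ l = ζ ^ m := by
  have : (ζ ^ l) ^ n = 1 := by
    rw [← zpow_natCast, ← zpow_mul, mul_comm, zpow_mul, h.zpow_eq_one, one_zpow]
  obtain ⟨m, -, hm⟩ := h.eq_pow_of_pow_eq_one this
  exact ⟨m, hm.symm⟩

theorem stmt17_general (q : ℕ) (hq : q.Prime)
    (ξ : ℂ) (hξ : ξ = Complex.exp (2 * Real.pi * Complex.I / q))
    (k kstar : ℕ)
    (hkk : k * kstar ≡ 1 [MOD q]) (l : ℤ) :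
    ∃ z ∈ Algebra.adjoin ℤ {ξ},
      ξ ^ l * (1 - ξ) / (1 - ξ ^ k) - (kstar : ℂ) = (1 - ξ) * z := by
  have : NeZero q := ⟨hq.ne_zero⟩
  have hprim : IsPrimitiveRoot ξ q := hξ ▸ Complex.isPrimitiveRoot_exp q hq.ne_zero
  have hpow : (ξ ^ k) ^ kstar = ξ := by
    rw [← pow_mul, pow_eq_pow_mod _ hprim.pow_eq_one, (hkk : k * kstar % q = 1 % q),
      Nat.mod_eq_of_lt hq.one_lt, pow_one]
  obtain ⟨m, hm⟩ := hprim.exists_pow_eq_zpow l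
  obtain ⟨z, hz, hz_eq⟩ :=
    exists_mem_adjoin_sum_pow_sub_card_eq ξ (range kstar) (fun j => m + k * j)
  refine ⟨z, hz, ?_⟩
  rw [mul_div_assoc, one_sub_div_one_sub_pow_eq_geom_sum (hprim.ne_one hq.one_lt) hpow, hm,
    ← hz_eq, mul_sum, card_range]
  simp only [pow_add, pow_mul]

theorem stmt17 (q : ℕ) (hq : q.Prime) (hq5 : 5 ≤ q)
    (ξ : ℂ) (hξ : ξ = Complex.exp (2 * Real.pi * Complex.I / q))
    (k kstar : ℕ) (hk : 1 ≤ k) (hk' : k ≤ q - 1)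
    (hks : 1 ≤ kstar) (hks' : kstar ≤ q - 1)
    (hkk : k * kstar ≡ 1 [MOD q]) (l : ℤ) :
    ∃ z ∈ Algebra.adjoin ℤ {ξ},
      ξ ^ l * (1 - ξ) / (1 - ξ ^ k) - (kstar : ℂ) = (1 - ξ) * z :=
  stmt17_general q hq ξ hξ k kstar hkk l
end
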